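/- In the same 4-node two-chain Kripke model (a < b, c < d, b ⊩ p, d ⊩ q), every formula θ built from p, q, ⊤ using only ¬ and ∧ satisfies: if both b and d force θ, then both a and c force θ. Hence p ∨ q is not equivalent to any {¬, ∧, ⊤}-formula in Gödel–Dummett logic. -/

import Mathlib

inductive Fm (α : Type) : Type where
  | top  : Fm α
  | atom : α → Fm α
  | neg  : Fm α → Fm α
  | and  : Fm α → Fm α → Fm α
  | or   : Fm α → Fm α → Fm α
  | imp  : Fm α → Fm α → Fm α

structure KripkeModel (α : Type) : Type 1 where
  K : Type
  le : K → K → Prop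
  refl : ∀ k, le k k
  trans : ∀ {a b c}, le a b → le b c → le a c
  antisymm : ∀ {a b}, le a b → le b a → a = b
  val : K → α → Prop
  persist : ∀ {k k' p}, le k k' → val k p → val k' p

def force {α : Type} (M : KripkeModel α) : M.K → Fm α → Prop
  | _, .top => True
  | k, .atom p => M.val k p
  | k, .neg φ => ∀ k', M.le k k' → ¬ force M k' φ
  | k, .and φ ψ => force M k φ ∧ force M k ψ
  | k, .or φ ψ => force M k φ ∨ force M k ψ
  | k, .imp φ ψ => ∀ k', M.le k k' → force M k' φ → force M k' ψ

/-- Formulas built from atoms and ⊤ using only ¬ and ∧. -/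
def OnlyNegAnd {α : Type} : Fm α → Prop
  | .top => True
  | .atom _ => True
  | .neg φ => OnlyNegAnd φ
  | .and φ ψ => OnlyNegAnd φ ∧ OnlyNegAnd ψ
  | .or _ _ => False
  | .imp _ _ => False

/-- The 4-node Kripke model consisting of two disjoint chains a = 0 < b = 1 and
c = 2 < d = 3, where b forces only the atom p = 0 and d forces only q = 1. -/
def M16 : KripkeModel (Fin 2) where
  K := Fin 4
  le := fun x y => x = y ∨ (x = 0 ∧ y = 1) ∨ (x = 2 ∧ y = 3)
  refl := by decide
  trans := by decide
  antisymm := by decide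
  val := fun k p => (k = 1 ∧ p = 0) ∨ (k = 3 ∧ p = 1)
  persist := by decide

/-- A Kripke model is connected when any two nodes above a common node are
comparable. -/
def Connected {α : Type} (M : KripkeModel α) : Prop :=
  ∀ k k' k'' : M.K, M.le k k' → M.le k k'' → M.le k' k'' ∨ M.le k'' k'

/-! Every {¬, ∧, ⊤}-formula forced at b and at d is forced at a and at c, by induction: no atom
is forced at both b and d, conjunction is componentwise, and for a negation we use a partial
converse of persistence: since every node above a (resp. c) lies below b (resp. d), a negation
forced at b (resp. d) is forced at a (resp. c). Now p ∨ q is forced at b and d but not at a, so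
no such formula is equivalent to it on the finite connected model M16. -/

theorem force_mono {α : Type} (M : KripkeModel α) (φ : Fm α) {k k' : M.K} (h : M.le k k')
    (hφ : force M k φ) : force M k' φ := by
  induction φ generalizing k k' with
  | top => trivial
  | atom => exact M.persist h hφ
  | neg => exact fun k'' h' => hφ k'' (M.trans h h')
  | and φ ψ ihφ ihψ => exact ⟨ihφ h hφ.1, ihψ h hφ.2⟩
  | or φ ψ ihφ ihψ => exact hφ.imp (ihφ h) (ihψ h)
  | imp => exact fun k'' h' => hφ k'' (M.trans h h')

theorem force_neg_of_forall_le {α : Type} (M : KripkeModel α) {φ : Fm α} {k top : M.K}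
    (hk : ∀ j, M.le k j → M.le j top) (htop : force M top (.neg φ)) : force M k (.neg φ) :=
  fun j hj hφ => htop top (M.refl top) (force_mono M φ (hk j hj) hφ)

theorem M16_le_one_of_zero_le : ∀ j : Fin 4, M16.le (0 : Fin 4) j → M16.le j (1 : Fin 4) := by
  simp only [M16]; decide

theorem M16_le_three_of_two_le : ∀ j : Fin 4, M16.le (2 : Fin 4) j → M16.le j (3 : Fin 4) := by
  simp only [M16]; decide

theorem M16_connected : Connected M16 := by
  simp only [Connected, M16]; decide

theorem M16_not_force_atom_one_and_three (i : Fin 2) :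
    ¬ (force M16 (1 : Fin 4) (.atom i) ∧ force M16 (3 : Fin 4) (.atom i)) := by
  simp only [force, M16]; fin_cases i <;> decide

theorem M16_force_zero_two_of_force_one_three (θ : Fm (Fin 2)) (hθ : OnlyNegAnd θ)
    (h1 : force M16 (1 : Fin 4) θ) (h3 : force M16 (3 : Fin 4) θ) :
    force M16 (0 : Fin 4) θ ∧ force M16 (2 : Fin 4) θ := by
  induction θ with
  | top => exact ⟨trivial, trivial⟩
  | atom i => exact (M16_not_force_atom_one_and_three i ⟨h1, h3⟩).elim
  | neg =>
    exact ⟨force_neg_of_forall_le M16 M16_le_one_of_zero_le h1,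
      force_neg_of_forall_le M16 M16_le_three_of_two_le h3⟩
  | and φ ψ ihφ ihψ =>
    obtain ⟨hφ0, hφ2⟩ := ihφ hθ.1 h1.1 h3.1
    obtain ⟨hψ0, hψ2⟩ := ihψ hθ.2 h1.2 h3.2
    exact ⟨⟨hφ0, hψ0⟩, ⟨hφ2, hψ2⟩⟩
  | or => exact hθ.elim
  | imp => exact hθ.elim

/-- In the two-chain model M16, every {¬, ∧, ⊤}-formula θ forced at both b and d
is forced at both a and c; hence p ∨ q is not equivalent to any {¬, ∧, ⊤}-formula
in Gödel–Dummett logic (i.e., over all connected finite Kripke models). -/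
theorem or_not_definable_from_neg_and :
    (∀ θ : Fm (Fin 2), OnlyNegAnd θ →
        force M16 (1 : Fin 4) θ → force M16 (3 : Fin 4) θ →
        force M16 (0 : Fin 4) θ ∧ force M16 (2 : Fin 4) θ) ∧
    ¬ ∃ θ : Fm (Fin 2), OnlyNegAnd θ ∧
        ∀ (M : KripkeModel (Fin 2)), Fintype M.K → Connected M →
          ∀ k : M.K, (force M k θ ↔ force M k (Fm.or (Fm.atom 0) (Fm.atom 1))) := by
  refine ⟨M16_force_zero_two_of_force_one_three, ?_⟩
  rintro ⟨θ, hθ, hdef⟩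
  have hiff := hdef M16 (inferInstanceAs (Fintype (Fin 4))) M16_connected
  have h1 : force M16 (1 : Fin 4) θ := (hiff (1 : Fin 4)).mpr (.inl (.inl ⟨rfl, rfl⟩))
  have h3 : force M16 (3 : Fin 4) θ := (hiff (3 : Fin 4)).mpr (.inr (.inr ⟨rfl, rfl⟩))
  have h0 := (hiff (0 : Fin 4)).mp (M16_force_zero_two_of_force_one_three θ hθ h1 h3).1
  exact absurd h0 (by simp only [force, M16]; decide)
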